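/- Under assumptions (A1)–(A4) with μ > 2, for every (f1,f2) ∈ 𝒦 and every η ∈ [s0,r0] one has E1inf ≤ E1(η; f1,f2) ≤ 1, where E1inf = exp(−[a·N1M/(L1m·(μ−1)·s0^(2μ−2)) + D1·K1M/(H_inf·L1m·(2μ+ν−1)·s0^(2μ+ν−1))]) and H_inf = (K1m/(μ+ν−1))·(s0^(−(μ+ν−1)) − r0^(−(μ+ν−1))). -/

import Mathlib

open MeasureTheory Filter Topology

noncomputable section

/-- The bundle of fixed constants of the problem. -/
structure Cst where
  nu : ℝ
  mu : ℝ
  a : ℝ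
  D1 : ℝ
  D2 : ℝ
  Q : ℝ
  D1s : ℝ
  D2s : ℝ
  L1m : ℝ
  L1M : ℝ
  N1m : ℝ
  N1M : ℝ
  K1m : ℝ
  K1M : ℝ
  L2m : ℝ
  L2M : ℝ
  N2m : ℝ
  N2M : ℝ
  K2m : ℝ
  K2M : ℝ
  Lt1 : ℝ
  Nt1 : ℝ
  Kt1 : ℝ
  Lt2 : ℝ
  Nt2 : ℝ
  Kt2 : ℝ

/-- The space `C[s0,r0]`, modeled as real functions continuous on `[s0,r0]`. -/
def C1 (s0 r0 : ℝ) : Set (ℝ → ℝ) := {f | ContinuousOn f (Set.Icc s0 r0)}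

/-- The set `ℳ ⊆ C_b[r0,∞)`: bounded continuous functions on `[r0,∞)` with
`f(r0) = 0` and `f(η) → -1` as `η → ∞`. -/
def Mset (r0 : ℝ) : Set (ℝ → ℝ) :=
  {f | ContinuousOn f (Set.Ici r0) ∧ (∃ C, ∀ x ∈ Set.Ici r0, |f x| ≤ C) ∧
    f r0 = 0 ∧ Tendsto f atTop (𝓝 (-1))}

/-- Sup norm of `f` over the set `S`. -/
def supOn (S : Set ℝ) (f : ℝ → ℝ) : ℝ := ⨆ x : S, |f x.1|

/-- Norm of the difference of two pairs in `𝒦 = C[s0,r0] × ℳ`. -/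
def pairNorm (s0 r0 : ℝ) (f1 f2 g1 g2 : ℝ → ℝ) : ℝ :=
  max (supOn (Set.Icc s0 r0) (f1 - g1)) (supOn (Set.Ici r0) (f2 - g2))

/-- Positivity assumptions on all the fixed constants and on `s0, r0`. -/
def PosC (c : Cst) (s0 r0 : ℝ) : Prop :=
  0 < c.a ∧ 0 < c.nu ∧ c.nu < 1 ∧ 2 < c.mu ∧ 0 < s0 ∧ s0 < r0 ∧
  0 < c.D1 ∧ 0 < c.D2 ∧ 0 < c.Q ∧ 0 < c.D1s ∧ 0 < c.D2s ∧
  0 < c.L1m ∧ 0 < c.L1M ∧ 0 < c.N1m ∧ 0 < c.N1M ∧ 0 < c.K1m ∧ 0 < c.K1M ∧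
  0 < c.L2m ∧ 0 < c.L2M ∧ 0 < c.N2m ∧ 0 < c.N2M ∧ 0 < c.K2m ∧ 0 < c.K2M ∧
  0 < c.Lt1 ∧ 0 < c.Nt1 ∧ 0 < c.Kt1 ∧ 0 < c.Lt2 ∧ 0 < c.Nt2 ∧ 0 < c.Kt2

/-- Positivity assumptions on all the fixed constants (no `s0, r0`). -/
def PosCst (c : Cst) : Prop :=
  0 < c.a ∧ 0 < c.nu ∧ c.nu < 1 ∧ 2 < c.mu ∧
  0 < c.D1 ∧ 0 < c.D2 ∧ 0 < c.Q ∧ 0 < c.D1s ∧ 0 < c.D2s ∧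
  0 < c.L1m ∧ 0 < c.L1M ∧ 0 < c.N1m ∧ 0 < c.N1M ∧ 0 < c.K1m ∧ 0 < c.K1M ∧
  0 < c.L2m ∧ 0 < c.L2M ∧ 0 < c.N2m ∧ 0 < c.N2M ∧ 0 < c.K2m ∧ 0 < c.K2M ∧
  0 < c.Lt1 ∧ 0 < c.Nt1 ∧ 0 < c.Kt1 ∧ 0 < c.Lt2 ∧ 0 < c.Nt2 ∧ 0 < c.Kt2

/-- Assumptions (A1)–(A4): continuity of the images of `L, N, K`, the two-sided
bounds and the Lipschitz bounds. -/
def Assum (c : Cst) (s0 r0 : ℝ) (L1 N1 K1 L2 N2 K2 : (ℝ → ℝ) → ℝ → ℝ) : Prop :=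
  (∀ f1 ∈ C1 s0 r0,
    ContinuousOn (L1 f1) (Set.Icc s0 r0) ∧ ContinuousOn (N1 f1) (Set.Icc s0 r0) ∧
      ContinuousOn (K1 f1) (Set.Icc s0 r0)) ∧
  (∀ f2 ∈ Mset r0,
    ContinuousOn (L2 f2) (Set.Ici r0) ∧ ContinuousOn (N2 f2) (Set.Ici r0) ∧
      ContinuousOn (K2 f2) (Set.Ici r0)) ∧
  (∀ f1 ∈ C1 s0 r0, ∀ η ∈ Set.Icc s0 r0,
    c.L1m * η ^ c.mu ≤ L1 f1 η ∧ L1 f1 η ≤ c.L1M * η ^ c.mu ∧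
    c.N1m * η ^ (-c.mu) ≤ N1 f1 η ∧ N1 f1 η ≤ c.N1M * η ^ (-c.mu) ∧
    c.K1m * η ^ (-c.mu) ≤ K1 f1 η ∧ K1 f1 η ≤ c.K1M * η ^ (-c.mu)) ∧
  (∀ f2 ∈ Mset r0, ∀ η ∈ Set.Ici r0,
    c.L2m * η ^ c.mu ≤ L2 f2 η ∧ L2 f2 η ≤ c.L2M * η ^ c.mu ∧
    c.N2m * η ^ (-c.mu) ≤ N2 f2 η ∧ N2 f2 η ≤ c.N2M * η ^ (-c.mu) ∧
    c.K2m * η ^ (-c.mu) ≤ K2 f2 η ∧ K2 f2 η ≤ c.K2M * η ^ (-c.mu)) ∧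
  (∀ f1 ∈ C1 s0 r0, ∀ g1 ∈ C1 s0 r0, ∀ η ∈ Set.Icc s0 r0,
    |L1 f1 η - L1 g1 η| ≤ c.Lt1 * supOn (Set.Icc s0 r0) (f1 - g1) ∧
    |N1 f1 η - N1 g1 η| ≤ c.Nt1 * supOn (Set.Icc s0 r0) (f1 - g1) ∧
    |K1 f1 η - K1 g1 η| ≤ c.Kt1 * η ^ (-c.mu) * supOn (Set.Icc s0 r0) (f1 - g1)) ∧
  (∀ f2 ∈ Mset r0, ∀ g2 ∈ Mset r0, ∀ η ∈ Set.Ici r0,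
    |L2 f2 η - L2 g2 η| ≤ c.Lt2 * supOn (Set.Ici r0) (f2 - g2) ∧
    |N2 f2 η - N2 g2 η| ≤ c.Nt2 * supOn (Set.Ici r0) (f2 - g2) ∧
    |K2 f2 η - K2 g2 η| ≤ c.Kt2 * η ^ (-c.mu) * supOn (Set.Ici r0) (f2 - g2))

/-- `H(f1,f2) = ∫_{s0}^{r0} K(f1)(v)/v^ν dv + ∫_{r0}^{∞} K(f2)(v)/v^ν dv`. -/
def Hf (c : Cst) (s0 r0 : ℝ) (L1 N1 K1 L2 N2 K2 : (ℝ → ℝ) → ℝ → ℝ) (f1 f2 : ℝ → ℝ) : ℝ :=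
  (∫ v in s0..r0, K1 f1 v / v ^ c.nu) + ∫ v in Set.Ioi r0, K2 f2 v / v ^ c.nu

/-- `E1(η; f1,f2)`. -/
def E1f (c : Cst) (s0 r0 : ℝ) (L1 N1 K1 L2 N2 K2 : (ℝ → ℝ) → ℝ → ℝ) (f1 f2 : ℝ → ℝ)
    (η : ℝ) : ℝ :=
  Real.exp (-(∫ v in s0..η,
    (2 * c.a * v * (N1 f1 v / L1 f1 v)
      + c.D1 / Hf c s0 r0 L1 N1 K1 L2 N2 K2 f1 f2 * (K1 f1 v / (L1 f1 v * v ^ c.nu)))))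

/-- `Φ1(η; f1,f2)`. -/
def Phi1f (c : Cst) (s0 r0 : ℝ) (L1 N1 K1 L2 N2 K2 : (ℝ → ℝ) → ℝ → ℝ) (f1 f2 : ℝ → ℝ)
    (η : ℝ) : ℝ :=
  ∫ v in s0..η, E1f c s0 r0 L1 N1 K1 L2 N2 K2 f1 f2 v / (L1 f1 v * v ^ c.nu)

/-- `H1(η; f1,f2)`. -/
def H1f (c : Cst) (s0 r0 : ℝ) (L1 N1 K1 L2 N2 K2 : (ℝ → ℝ) → ℝ → ℝ) (f1 f2 : ℝ → ℝ)
    (η : ℝ) : ℝ :=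
  ∫ v in s0..η, K1 f1 v / (v ^ c.nu * E1f c s0 r0 L1 N1 K1 L2 N2 K2 f1 f2 v)

/-- `G1(η; f1,f2)`. -/
def G1f (c : Cst) (s0 r0 : ℝ) (L1 N1 K1 L2 N2 K2 : (ℝ → ℝ) → ℝ → ℝ) (f1 f2 : ℝ → ℝ)
    (η : ℝ) : ℝ :=
  ∫ v in s0..η, E1f c s0 r0 L1 N1 K1 L2 N2 K2 f1 f2 v
    * H1f c s0 r0 L1 N1 K1 L2 N2 K2 f1 f2 v / (L1 f1 v * v ^ c.nu)

/-- `V1(f1,f2)(η)`. -/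
def V1f (c : Cst) (s0 r0 : ℝ) (L1 N1 K1 L2 N2 K2 : (ℝ → ℝ) → ℝ → ℝ) (f1 f2 : ℝ → ℝ)
    (η : ℝ) : ℝ :=
  s0 ^ c.nu * c.Q * Real.exp (-s0 ^ 2)
      * (Phi1f c s0 r0 L1 N1 K1 L2 N2 K2 f1 f2 r0 - Phi1f c s0 r0 L1 N1 K1 L2 N2 K2 f1 f2 η)
    + c.D1s / Hf c s0 r0 L1 N1 K1 L2 N2 K2 f1 f2 ^ 2
      * (G1f c s0 r0 L1 N1 K1 L2 N2 K2 f1 f2 r0 - G1f c s0 r0 L1 N1 K1 L2 N2 K2 f1 f2 η)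

/-- `E2(η; f1,f2)`. -/
def E2f (c : Cst) (s0 r0 : ℝ) (L1 N1 K1 L2 N2 K2 : (ℝ → ℝ) → ℝ → ℝ) (f1 f2 : ℝ → ℝ)
    (η : ℝ) : ℝ :=
  Real.exp (-(∫ v in r0..η,
    (2 * c.a * v * (N2 f2 v / L2 f2 v)
      + c.D2 / Hf c s0 r0 L1 N1 K1 L2 N2 K2 f1 f2 * (K2 f2 v / (L2 f2 v * v ^ c.nu)))))

/-- `Φ2(η; f1,f2)`. -/
def Phi2f (c : Cst) (s0 r0 : ℝ) (L1 N1 K1 L2 N2 K2 : (ℝ → ℝ) → ℝ → ℝ) (f1 f2 : ℝ → ℝ)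
    (η : ℝ) : ℝ :=
  ∫ v in r0..η, E2f c s0 r0 L1 N1 K1 L2 N2 K2 f1 f2 v / (L2 f2 v * v ^ c.nu)

/-- `Φ2(∞; f1,f2)`. -/
def Phi2I (c : Cst) (s0 r0 : ℝ) (L1 N1 K1 L2 N2 K2 : (ℝ → ℝ) → ℝ → ℝ) (f1 f2 : ℝ → ℝ) : ℝ :=
  ∫ v in Set.Ioi r0, E2f c s0 r0 L1 N1 K1 L2 N2 K2 f1 f2 v / (L2 f2 v * v ^ c.nu)

/-- `H2(η; f1,f2)`. -/
def H2f (c : Cst) (s0 r0 : ℝ) (L1 N1 K1 L2 N2 K2 : (ℝ → ℝ) → ℝ → ℝ) (f1 f2 : ℝ → ℝ)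
    (η : ℝ) : ℝ :=
  ∫ v in r0..η, K2 f2 v / (v ^ c.nu * E2f c s0 r0 L1 N1 K1 L2 N2 K2 f1 f2 v)

/-- `G2(η; f1,f2)`. -/
def G2f (c : Cst) (s0 r0 : ℝ) (L1 N1 K1 L2 N2 K2 : (ℝ → ℝ) → ℝ → ℝ) (f1 f2 : ℝ → ℝ)
    (η : ℝ) : ℝ :=
  ∫ v in r0..η, E2f c s0 r0 L1 N1 K1 L2 N2 K2 f1 f2 v
    * H2f c s0 r0 L1 N1 K1 L2 N2 K2 f1 f2 v / (L2 f2 v * v ^ c.nu)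

/-- `G2(∞; f1,f2) = lim_{η→∞} G2(η; f1,f2)`. -/
def G2I (c : Cst) (s0 r0 : ℝ) (L1 N1 K1 L2 N2 K2 : (ℝ → ℝ) → ℝ → ℝ) (f1 f2 : ℝ → ℝ) : ℝ :=
  limUnder atTop (G2f c s0 r0 L1 N1 K1 L2 N2 K2 f1 f2)

/-- `V2(f1,f2)(η)`. -/
def V2f (c : Cst) (s0 r0 : ℝ) (L1 N1 K1 L2 N2 K2 : (ℝ → ℝ) → ℝ → ℝ) (f1 f2 : ℝ → ℝ)
    (η : ℝ) : ℝ :=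
  (c.D2s / Hf c s0 r0 L1 N1 K1 L2 N2 K2 f1 f2 ^ 2 * G2I c s0 r0 L1 N1 K1 L2 N2 K2 f1 f2 - 1)
      * (Phi2f c s0 r0 L1 N1 K1 L2 N2 K2 f1 f2 η / Phi2I c s0 r0 L1 N1 K1 L2 N2 K2 f1 f2)
    - c.D2s / Hf c s0 r0 L1 N1 K1 L2 N2 K2 f1 f2 ^ 2 * G2f c s0 r0 L1 N1 K1 L2 N2 K2 f1 f2 η

/-! Constants appearing in the estimates. -/

def Hinf (c : Cst) (s0 r0 : ℝ) : ℝ :=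
  c.K1m / (c.mu + c.nu - 1) * (s0 ^ (-(c.mu + c.nu - 1)) - r0 ^ (-(c.mu + c.nu - 1)))

def Hsup (c : Cst) (s0 r0 : ℝ) : ℝ :=
  (c.K1M * s0 ^ (-(c.mu + c.nu - 1)) + c.K2M * r0 ^ (-(c.mu + c.nu - 1))) / (c.mu + c.nu - 1)

def Htil (c : Cst) (s0 r0 : ℝ) : ℝ :=
  (c.Kt1 * s0 ^ (-(c.mu + c.nu - 1)) + c.Kt2 * r0 ^ (-(c.mu + c.nu - 1))) / (c.mu + c.nu - 1)

/-- Limit of `Hinf` as `r0 → ∞`. -/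
def HinfI (c : Cst) (s0 : ℝ) : ℝ := c.K1m / (c.mu + c.nu - 1) * s0 ^ (-(c.mu + c.nu - 1))

/-- Limit of `Hsup` as `r0 → ∞`. -/
def HsupI (c : Cst) (s0 : ℝ) : ℝ := c.K1M * s0 ^ (-(c.mu + c.nu - 1)) / (c.mu + c.nu - 1)

/-- Limit of `Htil` as `r0 → ∞`. -/
def HtilI (c : Cst) (s0 : ℝ) : ℝ := c.Kt1 * s0 ^ (-(c.mu + c.nu - 1)) / (c.mu + c.nu - 1)

/-- `E1inf` as a function of the value `h` of `Hinf`. -/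
def E1infG (c : Cst) (s0 h : ℝ) : ℝ :=
  Real.exp (-(c.a * c.N1M / (c.L1m * (c.mu - 1) * s0 ^ (2 * c.mu - 2))
    + c.D1 * c.K1M / (h * c.L1m * (2 * c.mu + c.nu - 1) * s0 ^ (2 * c.mu + c.nu - 1))))

/-- `Ẽ1` as a function of the values `h` of `Hinf` and `ht` of `Htil`. -/
def E1tilG (c : Cst) (s0 h ht : ℝ) : ℝ :=
  2 * c.a * (c.Nt1 / (c.L1m * (c.mu - 2) * s0 ^ (c.mu - 2))
      + c.N1M * c.Lt1 / (c.L1m ^ 2 * (3 * c.mu - 2) * s0 ^ (3 * c.mu - 2)))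
    + c.D1 * (c.Kt1 / (h * c.L1m * (2 * c.mu + c.nu - 1) * s0 ^ (2 * c.mu + c.nu - 1))
      + c.K1M / (h * c.L1m)
        * (ht / (h * (2 * c.mu + c.nu - 1) * s0 ^ (2 * c.mu + c.nu - 1))
          + c.Lt1 / (c.L1m * (3 * c.mu + c.nu - 1) * s0 ^ (3 * c.mu + c.nu - 1))))

def Phi1tilG (c : Cst) (s0 h ht : ℝ) : ℝ :=
  E1tilG c s0 h ht / (c.L1m * (c.mu + c.nu - 1) * s0 ^ (c.mu + c.nu - 1))
    + c.Lt1 / (c.L1m ^ 2 * (2 * c.mu + c.nu - 1) * s0 ^ (2 * c.mu + c.nu - 1))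

def H1supG (c : Cst) (s0 h : ℝ) : ℝ :=
  c.K1M / (E1infG c s0 h * (c.mu + c.nu - 1) * s0 ^ (c.mu + c.nu - 1))

def H1tilG (c : Cst) (s0 h ht : ℝ) : ℝ :=
  (c.Kt1 + c.K1M * E1tilG c s0 h ht / E1infG c s0 h)
    / (E1infG c s0 h * (c.mu + c.nu - 1) * s0 ^ (c.mu + c.nu - 1))

def G1supG (c : Cst) (s0 h : ℝ) : ℝ :=
  H1supG c s0 h / (c.L1m * (c.mu + c.nu - 1) * s0 ^ (c.mu + c.nu - 1))

def G1tilG (c : Cst) (s0 h ht : ℝ) : ℝ :=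
  H1supG c s0 h * Phi1tilG c s0 h ht
    + H1tilG c s0 h ht / (c.L1m * (c.mu + c.nu - 1) * s0 ^ (c.mu + c.nu - 1))

/-- `ε1` as a function of the values `h` of `Hinf`, `hs` of `Hsup`, `ht` of `Htil`. -/
def eps1G (c : Cst) (s0 h hs ht : ℝ) : ℝ :=
  2 * s0 ^ c.nu * c.Q * Real.exp (-s0 ^ 2) * Phi1tilG c s0 h ht
    + 2 * c.D1s * (2 * G1supG c s0 h * hs * ht / h ^ 4 + G1tilG c s0 h ht / h ^ 2)

def E1inf (c : Cst) (s0 r0 : ℝ) : ℝ := E1infG c s0 (Hinf c s0 r0)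
def E1til (c : Cst) (s0 r0 : ℝ) : ℝ := E1tilG c s0 (Hinf c s0 r0) (Htil c s0 r0)
def Phi1til (c : Cst) (s0 r0 : ℝ) : ℝ := Phi1tilG c s0 (Hinf c s0 r0) (Htil c s0 r0)
def H1sup (c : Cst) (s0 r0 : ℝ) : ℝ := H1supG c s0 (Hinf c s0 r0)
def H1til (c : Cst) (s0 r0 : ℝ) : ℝ := H1tilG c s0 (Hinf c s0 r0) (Htil c s0 r0)
def G1sup (c : Cst) (s0 r0 : ℝ) : ℝ := G1supG c s0 (Hinf c s0 r0)
def G1til (c : Cst) (s0 r0 : ℝ) : ℝ := G1tilG c s0 (Hinf c s0 r0) (Htil c s0 r0)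
def eps1 (c : Cst) (s0 r0 : ℝ) : ℝ := eps1G c s0 (Hinf c s0 r0) (Hsup c s0 r0) (Htil c s0 r0)

/-- `j1(s0) = lim_{r0→∞} ε1(r0,s0)`: the same expression with `Hinf, Hsup, Htil`
replaced by their limits as `r0 → ∞`. -/
def j1 (c : Cst) (s0 : ℝ) : ℝ := eps1G c s0 (HinfI c s0) (HsupI c s0) (HtilI c s0)

def E2inf (c : Cst) (s0 r0 : ℝ) : ℝ :=
  Real.exp (-(c.a * c.N2M / (c.L2m * (c.mu - 1) * r0 ^ (2 * c.mu - 2))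
    + c.D2 * c.K2M / (Hinf c s0 r0 * c.L2m * (2 * c.mu + c.nu - 1) * r0 ^ (2 * c.mu + c.nu - 1))))

def E2til (c : Cst) (s0 r0 : ℝ) : ℝ :=
  2 * c.a * (c.Nt2 / (c.L2m * (c.mu - 2) * r0 ^ (c.mu - 2))
      + c.N2M * c.Lt2 / (c.L2m ^ 2 * (3 * c.mu - 2) * r0 ^ (3 * c.mu - 2)))
    + c.D2 * (c.Kt2 / (Hinf c s0 r0 * c.L2m * (2 * c.mu + c.nu - 1) * r0 ^ (2 * c.mu + c.nu - 1))
      + c.K2M / (Hinf c s0 r0 * c.L2m)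
        * (Htil c s0 r0 / (Hinf c s0 r0 * (2 * c.mu + c.nu - 1) * r0 ^ (2 * c.mu + c.nu - 1))
          + c.Lt2 / (c.L2m * (3 * c.mu + c.nu - 1) * r0 ^ (3 * c.mu + c.nu - 1))))

def Phi2til (c : Cst) (s0 r0 : ℝ) : ℝ :=
  E2til c s0 r0 / (c.L2m * (c.mu + c.nu - 1) * r0 ^ (c.mu + c.nu - 1))
    + c.Lt2 / (c.L2m ^ 2 * (2 * c.mu + c.nu - 1) * r0 ^ (2 * c.mu + c.nu - 1))

/-- `Φ2inf(∞)(r0,s0)`. -/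
def Phi2infC (c : Cst) (s0 r0 : ℝ) : ℝ :=
  E2inf c s0 r0 / (c.L2M * (c.mu + c.nu - 1) * r0 ^ (c.mu + c.nu - 1))

/-- `Φ2sup(r0)`. -/
def Phi2supC (c : Cst) (r0 : ℝ) : ℝ := 1 / (c.L2m * (c.mu + c.nu - 1) * r0 ^ (c.mu + c.nu - 1))

def H2sup (c : Cst) (s0 r0 : ℝ) : ℝ :=
  c.K2M / (E2inf c s0 r0 * (c.mu + c.nu - 1) * r0 ^ (c.mu + c.nu - 1))

def H2til (c : Cst) (s0 r0 : ℝ) : ℝ :=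
  (c.Kt2 + c.K2M * E2til c s0 r0 / E2inf c s0 r0)
    / (E2inf c s0 r0 * (c.mu + c.nu - 1) * r0 ^ (c.mu + c.nu - 1))

def G2sup (c : Cst) (s0 r0 : ℝ) : ℝ :=
  H2sup c s0 r0 / (c.L2m * (c.mu + c.nu - 1) * r0 ^ (c.mu + c.nu - 1))

def G2til (c : Cst) (s0 r0 : ℝ) : ℝ :=
  H2sup c s0 r0 * Phi2til c s0 r0
    + H2til c s0 r0 / (c.L2m * (c.mu + c.nu - 1) * r0 ^ (c.mu + c.nu - 1))

def eps21 (c : Cst) (s0 r0 : ℝ) : ℝ := 2 * Phi2til c s0 r0 / Phi2infC c s0 r0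

def eps22 (c : Cst) (s0 r0 : ℝ) : ℝ :=
  G2til c s0 r0 / Hinf c s0 r0 ^ 2
    + 2 * G2sup c s0 r0 * Hsup c s0 r0 * Htil c s0 r0 / Hinf c s0 r0 ^ 4

def eps23 (c : Cst) (s0 r0 : ℝ) : ℝ :=
  Phi2supC c r0 / Phi2infC c s0 r0 * eps22 c s0 r0
    + G2sup c s0 r0 / Hinf c s0 r0 ^ 2 * eps21 c s0 r0

def eps2 (c : Cst) (s0 r0 : ℝ) : ℝ := eps21 c s0 r0 + eps22 c s0 r0 + eps23 c s0 r0

/-!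
`E1 = exp (-∫ rate)` with a nonnegative rate, whence `E1 ≤ 1`. For the lower bound,
`H(f1,f2) ≥ Hinf > 0`, so by (A1) the rate is at most `C₁ v^(1-2μ) + C₂ v^(-(2μ+ν))`;
integrating over `[s0, η] ⊆ [s0, ∞)` gives exactly the exponent of `E1inf`.
-/

section RpowIntegral

variable {a b q : ℝ}

lemma integral_rpow_neg_add_one (ha : 0 < a) (hab : a ≤ b) (hq : q ≠ 0) :
    ∫ x in a..b, x ^ (-(q + 1)) = (a ^ (-q) - b ^ (-q)) / q := by
  have h0 : (0 : ℝ) ∉ Set.uIcc a b := by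
    rw [Set.uIcc_of_le hab]
    exact fun h => ha.not_ge h.1
  rw [integral_rpow (Or.inr ⟨fun h => hq (by linarith), h0⟩), show -(q + 1) + 1 = -q by ring,
    div_neg, ← neg_div, neg_sub]

lemma integral_rpow_neg_add_one_le (ha : 0 < a) (hab : a ≤ b) (hq : 0 < q) :
    ∫ x in a..b, x ^ (-(q + 1)) ≤ a ^ (-q) / q := by
  rw [integral_rpow_neg_add_one ha hab hq.ne']
  gcongr
  exact sub_le_self _ (Real.rpow_nonneg (ha.le.trans hab) _)

lemma intervalIntegrable_rpow_of_pos (ha : 0 < a) (hab : a ≤ b) (p : ℝ) :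
    IntervalIntegrable (fun x => x ^ p) volume a b := by
  refine intervalIntegral.intervalIntegrable_rpow (Or.inr ?_)
  rw [Set.uIcc_of_le hab]
  exact fun h => ha.not_ge h.1

end RpowIntegral

/-- No integrability of `f` is needed: if it fails, the left-hand side is `0`. -/
lemma intervalIntegral.integral_mono_on_of_nonneg {f g : ℝ → ℝ} {a b : ℝ} (hab : a ≤ b)
    (hg : IntervalIntegrable g volume a b) (hf : ∀ x ∈ Set.Icc a b, 0 ≤ f x)
    (hfg : ∀ x ∈ Set.Icc a b, f x ≤ g x) :
    ∫ x in a..b, f x ≤ ∫ x in a..b, g x := by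
  rw [intervalIntegral.integral_of_le hab, intervalIntegral.integral_of_le hab]
  exact integral_mono_of_nonneg
    (ae_restrict_of_forall_mem measurableSet_Ioc fun x hx => hf x (Set.Ioc_subset_Icc_self hx))
    hg.1 (ae_restrict_of_forall_mem measurableSet_Ioc fun x hx =>
      hfg x (Set.Ioc_subset_Icc_self hx))

lemma rate_le_of_bounds {a D h H Lm NM KM μ ν v l n k : ℝ} (ha : 0 ≤ a) (hD : 0 ≤ D)
    (hh : 0 < h) (hhH : h ≤ H) (hLm : 0 < Lm) (hNM : 0 ≤ NM) (hv : 0 < v)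
    (hl : Lm * v ^ μ ≤ l) (hn : n ≤ NM * v ^ (-μ)) (hk : 0 ≤ k) (hkM : k ≤ KM * v ^ (-μ)) :
    2 * a * v * (n / l) + D / H * (k / (l * v ^ ν)) ≤
      2 * a * NM / Lm * v ^ (-((2 * μ - 2) + 1))
        + D * KM / (h * Lm) * v ^ (-((2 * μ + ν - 1) + 1)) := by
  have hLv : 0 < Lm * v ^ μ := by positivity
  have hl0 : 0 < l := hLv.trans_le hl
  have hn_div : n / l ≤ NM * v ^ (-μ) / (Lm * v ^ μ) :=
    div_le_div₀ (by positivity) hn hLv hl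
  have hk_div : k / (l * v ^ ν) ≤ KM * v ^ (-μ) / (Lm * v ^ μ * v ^ ν) :=
    div_le_div₀ (hk.trans hkM) hkM (by positivity) (by gcongr)
  have hDH : D / H ≤ D / h := div_le_div_of_nonneg_left hD hh hhH
  have hexp1 : v ^ (-((2 * μ - 2) + 1)) = v * v ^ (-μ) / v ^ μ := by
    rw [show -((2 * μ - 2) + 1) = 1 + -μ - μ by ring, Real.rpow_sub hv, Real.rpow_add hv,
      Real.rpow_one]
  have hexp2 : v ^ (-((2 * μ + ν - 1) + 1)) = v ^ (-μ) / (v ^ μ * v ^ ν) := by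
    rw [show -((2 * μ + ν - 1) + 1) = -μ - μ - ν by ring, Real.rpow_sub hv, Real.rpow_sub hv,
      div_div]
  calc 2 * a * v * (n / l) + D / H * (k / (l * v ^ ν))
      ≤ 2 * a * v * (NM * v ^ (-μ) / (Lm * v ^ μ))
          + D / h * (KM * v ^ (-μ) / (Lm * v ^ μ * v ^ ν)) := by
        gcongr
    _ = _ := by
        rw [hexp1, hexp2]
        field_simp

section E1

variable {c : Cst} {s0 r0 : ℝ} {L1 N1 K1 L2 N2 K2 : (ℝ → ℝ) → ℝ → ℝ} {f1 f2 : ℝ → ℝ}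

def E1rate (c : Cst) (s0 r0 : ℝ) (L1 N1 K1 L2 N2 K2 : (ℝ → ℝ) → ℝ → ℝ) (f1 f2 : ℝ → ℝ)
    (v : ℝ) : ℝ :=
  2 * c.a * v * (N1 f1 v / L1 f1 v)
    + c.D1 / Hf c s0 r0 L1 N1 K1 L2 N2 K2 f1 f2 * (K1 f1 v / (L1 f1 v * v ^ c.nu))

lemma E1f_eq_exp_neg_integral (η : ℝ) :
    E1f c s0 r0 L1 N1 K1 L2 N2 K2 f1 f2 η
      = Real.exp (-∫ v in s0..η, E1rate c s0 r0 L1 N1 K1 L2 N2 K2 f1 f2 v) := rfl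

lemma Hinf_pos (hpos : PosC c s0 r0) : 0 < Hinf c s0 r0 := by
  obtain ⟨-, hnu, -, hmu, hs0, hsr, -, -, -, -, -, -, -, -, -, hK1m, -⟩ := hpos
  have hq : 0 < c.mu + c.nu - 1 := by linarith
  have hr : r0 ^ (-(c.mu + c.nu - 1)) < s0 ^ (-(c.mu + c.nu - 1)) :=
    Real.rpow_lt_rpow_of_neg hs0 hsr (by linarith)
  unfold Hinf
  exact mul_pos (div_pos hK1m hq) (sub_pos.2 hr)

/-- `Hinf` is `∫_{s0}^{r0} K1m v^(-μ-ν) dv`, the first part of `H` with `K(f1)` replaced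
by its lower bound and the (nonnegative) tail over `[r0, ∞)` dropped. -/
lemma Hinf_le_Hf (hpos : PosC c s0 r0) (hA : Assum c s0 r0 L1 N1 K1 L2 N2 K2)
    (hf1 : f1 ∈ C1 s0 r0) (hf2 : f2 ∈ Mset r0) :
    Hinf c s0 r0 ≤ Hf c s0 r0 L1 N1 K1 L2 N2 K2 f1 f2 := by
  obtain ⟨-, hnu, -, hmu, hs0, hsr, -, -, -, -, -, -, -, -, -, -, -, -, -, -, -, hK2m, -⟩ := hpos
  obtain ⟨hcont1, -, hB1, hB2, -⟩ := hA
  have hq : 0 < c.mu + c.nu - 1 := by linarith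
  have hHinf : Hinf c s0 r0 = ∫ v in s0..r0, c.K1m * v ^ (-((c.mu + c.nu - 1) + 1)) := by
    rw [intervalIntegral.integral_const_mul, integral_rpow_neg_add_one hs0 hsr.le hq.ne', Hinf]
    ring
  have hK1int : IntervalIntegrable (fun v => K1 f1 v / v ^ c.nu) volume s0 r0 := by
    refine ContinuousOn.intervalIntegrable ?_
    rw [Set.uIcc_of_le hsr.le]
    exact (hcont1 f1 hf1).2.2.div
      (fun v hv => (Real.continuousAt_rpow_const v c.nu
        (Or.inl (hs0.trans_le hv.1).ne')).continuousWithinAt)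
      (fun v hv => (Real.rpow_pos_of_pos (hs0.trans_le hv.1) _).ne')
  have hfirst : Hinf c s0 r0 ≤ ∫ v in s0..r0, K1 f1 v / v ^ c.nu := by
    rw [hHinf]
    refine intervalIntegral.integral_mono_on hsr.le
      ((intervalIntegrable_rpow_of_pos hs0 hsr.le _).const_mul _) hK1int fun v hv => ?_
    have hv0 : 0 < v := hs0.trans_le hv.1
    rw [show -((c.mu + c.nu - 1) + 1) = -c.mu - c.nu by ring, Real.rpow_sub hv0, ← mul_div_assoc]
    gcongr
    exact (hB1 f1 hf1 v hv).2.2.2.2.1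
  have htail : 0 ≤ ∫ v in Set.Ioi r0, K2 f2 v / v ^ c.nu := by
    refine setIntegral_nonneg measurableSet_Ioi fun v hv => ?_
    have hv0 : 0 < v := (hs0.trans hsr).trans hv
    have hK2 := (hB2 f2 hf2 v (Set.mem_Ici.2 hv.le)).2.2.2.2.1
    exact div_nonneg ((by positivity : 0 ≤ c.K2m * v ^ (-c.mu)).trans hK2) (by positivity)
  unfold Hf
  linarith

lemma E1rate_nonneg (hpos : PosC c s0 r0) (hA : Assum c s0 r0 L1 N1 K1 L2 N2 K2)
    (hf1 : f1 ∈ C1 s0 r0) (hf2 : f2 ∈ Mset r0) {v : ℝ} (hv : v ∈ Set.Icc s0 r0) :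
    0 ≤ E1rate c s0 r0 L1 N1 K1 L2 N2 K2 f1 f2 v := by
  have hH := (Hinf_pos hpos).trans_le (Hinf_le_Hf hpos hA hf1 hf2)
  obtain ⟨ha, -, -, -, hs0, -, hD1, -, -, -, -, hL1m, -, hN1m, -, hK1m, -⟩ := hpos
  have hv0 : 0 < v := hs0.trans_le hv.1
  obtain ⟨hL, -, hN, -, hK, -⟩ := hA.2.2.1 f1 hf1 v hv
  have : 0 < L1 f1 v := (by positivity : 0 < c.L1m * v ^ c.mu).trans_le hL
  have : 0 < N1 f1 v := (by positivity : 0 < c.N1m * v ^ (-c.mu)).trans_le hN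
  have : 0 < K1 f1 v := (by positivity : 0 < c.K1m * v ^ (-c.mu)).trans_le hK
  unfold E1rate
  positivity

lemma integral_E1rate_le (hpos : PosC c s0 r0) (hA : Assum c s0 r0 L1 N1 K1 L2 N2 K2)
    (hf1 : f1 ∈ C1 s0 r0) (hf2 : f2 ∈ Mset r0) {η : ℝ} (hη : η ∈ Set.Icc s0 r0) :
    ∫ v in s0..η, E1rate c s0 r0 L1 N1 K1 L2 N2 K2 f1 f2 v ≤
      c.a * c.N1M / (c.L1m * (c.mu - 1) * s0 ^ (2 * c.mu - 2))
        + c.D1 * c.K1M / (Hinf c s0 r0 * c.L1m * (2 * c.mu + c.nu - 1)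
          * s0 ^ (2 * c.mu + c.nu - 1)) := by
  have hHinf := Hinf_pos hpos
  have hHle := Hinf_le_Hf hpos hA hf1 hf2
  have hrate := fun v (hv : v ∈ Set.Icc s0 η) =>
    E1rate_nonneg hpos hA hf1 hf2 ⟨hv.1, hv.2.trans hη.2⟩
  obtain ⟨ha, hnu, -, hmu, hs0, -, hD1, -, -, -, -, hL1m, -, -, hN1M, hK1m, hK1M, -⟩ := hpos
  set q1 := 2 * c.mu - 2
  set q2 := 2 * c.mu + c.nu - 1
  have hq1 : 0 < q1 := by linarith
  have hq2 : 0 < q2 := by linarith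
  set cN := 2 * c.a * c.N1M / c.L1m
  set cK := c.D1 * c.K1M / (Hinf c s0 r0 * c.L1m)
  have hint := intervalIntegrable_rpow_of_pos hs0 hη.1
  calc ∫ v in s0..η, E1rate c s0 r0 L1 N1 K1 L2 N2 K2 f1 f2 v
      ≤ ∫ v in s0..η, (cN * v ^ (-(q1 + 1)) + cK * v ^ (-(q2 + 1))) := by
        refine intervalIntegral.integral_mono_on_of_nonneg hη.1
          (((hint _).const_mul _).add ((hint _).const_mul _)) (fun v hv => ?_) fun v hv => ?_
        · exact hrate v hv
        · have hv0 : 0 < v := hs0.trans_le hv.1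
          obtain ⟨hL, -, hN, hNM, hK, hKM⟩ := hA.2.2.1 f1 hf1 v ⟨hv.1, hv.2.trans hη.2⟩
          exact rate_le_of_bounds ha.le hD1.le hHinf hHle hL1m hN1M.le hv0 hL hNM
            ((by positivity : 0 ≤ c.K1m * v ^ (-c.mu)).trans hK) hKM
    _ = cN * (∫ v in s0..η, v ^ (-(q1 + 1))) + cK * ∫ v in s0..η, v ^ (-(q2 + 1)) := by
        rw [intervalIntegral.integral_add ((hint _).const_mul _) ((hint _).const_mul _),
          intervalIntegral.integral_const_mul, intervalIntegral.integral_const_mul]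
    _ ≤ cN * (s0 ^ (-q1) / q1) + cK * (s0 ^ (-q2) / q2) := by
        gcongr
        · exact integral_rpow_neg_add_one_le hs0 hη.1 hq1
        · exact integral_rpow_neg_add_one_le hs0 hη.1 hq2
    _ = _ := by
        simp only [cN, cK, q1, q2]
        rw [Real.rpow_neg hs0.le, Real.rpow_neg hs0.le]
        field_simp

end E1

theorem stmt3 (c : Cst) (s0 r0 : ℝ) (L1 N1 K1 L2 N2 K2 : (ℝ → ℝ) → ℝ → ℝ)
    (hpos : PosC c s0 r0) (hA : Assum c s0 r0 L1 N1 K1 L2 N2 K2)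
    (f1 f2 : ℝ → ℝ) (hf1 : f1 ∈ C1 s0 r0) (hf2 : f2 ∈ Mset r0) :
    ∀ η ∈ Set.Icc s0 r0,
      E1inf c s0 r0 ≤ E1f c s0 r0 L1 N1 K1 L2 N2 K2 f1 f2 η ∧ E1f c s0 r0 L1 N1 K1 L2 N2 K2 f1 f2 η ≤ 1 := by
  intro η hη
  rw [E1f_eq_exp_neg_integral]
  have hnonneg : 0 ≤ ∫ v in s0..η, E1rate c s0 r0 L1 N1 K1 L2 N2 K2 f1 f2 v :=
    intervalIntegral.integral_nonneg hη.1 fun v hv =>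
      E1rate_nonneg hpos hA hf1 hf2 ⟨hv.1, hv.2.trans hη.2⟩
  exact ⟨Real.exp_le_exp.2 (neg_le_neg (integral_E1rate_le hpos hA hf1 hf2 hη)),
    Real.exp_le_one_iff.2 (neg_nonpos.2 hnonneg)⟩
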